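/- In a social network game over a simple cycle (nodes 1 → 2 → ... → n → 1), if s is a Nash equilibrium and s_i = t ≠ t_0 for some node i, then s_{i⊖1} = t, where i⊖1 is the cyclic predecessor of i; consequently s_j = t for all nodes j. -/

import Mathlib

open scoped Classical
noncomputable section

/-- A social network: weighted directed graph, product assignment, thresholds. -/
structure SN (V P : Type) [Fintype V] where
  /-- `E j i` : there is an edge from `j` to `i` (so `j` is a neighbour of `i`). -/
  E : V → V → Prop
  /-- `w j i` is the weight of the edge from `j` to `i`. -/
  w : V → V → ℝ
  /-- The product set of each node (nonempty). -/
  Pr : V → Set P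
  /-- Threshold function. -/
  theta : V → P → ℝ
  PrNe : ∀ i, (Pr i).Nonempty
  wNonneg : ∀ j i, 0 ≤ w j i
  wLeOne : ∀ j i, w j i ≤ 1
  wSumLeOne : ∀ i, (∑ j ∈ Finset.univ.filter (fun j => E j i), w j i) ≤ 1
  thetaPos : ∀ i t, 0 < theta i t
  thetaLeOne : ∀ i t, theta i t ≤ 1

namespace SN

variable {V P : Type} [Fintype V]

/-- A source node has no in-neighbours. -/
def isSource (N : SN V P) (i : V) : Prop := ∀ j, ¬ N.E j i

/-- A joint strategy is valid if every chosen product belongs to the player's product set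
(`none` is the abstention strategy `t₀`). -/
def valid (N : SN V P) (s : V → Option P) : Prop :=
  ∀ i t, s i = some t → t ∈ N.Pr i

/-- `a` is an admissible strategy for player `i`. -/
def validMove (N : SN V P) (i : V) (a : Option P) : Prop :=
  ∀ t, a = some t → t ∈ N.Pr i

/-- The payoff of player `i` in the social network game (with constant `c0` for sources). -/
def payoff (N : SN V P) (c0 : ℝ) (s : V → Option P) (i : V) : ℝ :=
  match s i with
  | none => 0
  | some t =>
    if N.isSource i then c0
    else (∑ j ∈ Finset.univ.filter (fun j => N.E j i ∧ s j = some t), N.w j i) - N.theta i t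

/-- Nash equilibrium of the social network game. -/
def Nash [DecidableEq V] (N : SN V P) (c0 : ℝ) (s : V → Option P) : Prop :=
  N.valid s ∧ ∀ i a, N.validMove i a →
    N.payoff c0 (Function.update s i a) i ≤ N.payoff c0 s i

/-- A profitable deviation from `s` to `s'`. -/
def profDev [DecidableEq V] (N : SN V P) (c0 : ℝ) (s s' : V → Option P) : Prop :=
  ∃ i a, N.validMove i a ∧ s' = Function.update s i a ∧
    N.payoff c0 s i < N.payoff c0 s' i

/-- A finite improvement path from `s` to `s'` (a sequence of profitable deviations). -/
def impPath [DecidableEq V] (N : SN V P) (c0 : ℝ) (s s' : V → Option P) : Prop :=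
  ∃ k, ∃ σ : Fin (k+1) → (V → Option P), σ 0 = s ∧ σ (Fin.last k) = s' ∧
    ∀ m : Fin k, N.profDev c0 (σ m.castSucc) (σ m.succ)

/-- `N'` results from `N` by adding product `t` to the product set of node `i`. -/
def expansionAt (N N' : SN V P) (i : V) (t : P) : Prop :=
  N'.E = N.E ∧ N'.w = N.w ∧ N'.theta = N.theta ∧ t ∉ N.Pr i ∧
  N'.Pr = Function.update N.Pr i (insert t (N.Pr i)) ∧ ∀ j, j ≠ i → N'.Pr j = N.Pr j

/-- `N'` is an expansion of `N`. -/
def expansion (N N' : SN V P) : Prop := ∃ i t, expansionAt N N' i t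

/-- `N'` results from `N` by removing product `t` from the product set of node `i`. -/
def contractionAt (N N' : SN V P) (i : V) (t : P) : Prop :=
  N'.E = N.E ∧ N'.w = N.w ∧ N'.theta = N.theta ∧ t ∈ N.Pr i ∧
  N'.Pr = Function.update N.Pr i (N.Pr i \ {t})

/-- The underlying graph is the simple cycle `0 → 1 → ⋯ → (n-1) → 0`. -/
def simpleCycle {n : ℕ} [NeZero n] (N : SN (Fin n) P) : Prop :=
  ∀ j i, N.E j i ↔ i = j + 1

end SN


namespace SN

variable {V P : Type} [Fintype V]

theorem payoff_update_none [DecidableEq V] (N : SN V P) (c0 : ℝ) (s : V → Option P) (i : V) :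
    N.payoff c0 (Function.update s i none) i = 0 := by
  simp [payoff]

theorem Nash.payoff_nonneg [DecidableEq V] {N : SN V P} {c0 : ℝ} {s : V → Option P}
    (hs : N.Nash c0 s) (i : V) : 0 ≤ N.payoff c0 s i :=
  N.payoff_update_none c0 s i ▸ hs.2 i none (fun _ h => nomatch h)

theorem payoff_eq_neg_theta (N : SN V P) (c0 : ℝ) {s : V → Option P} {i : V} {t : P}
    (hi : s i = some t) (hsrc : ¬ N.isSource i) (hnbr : ∀ j, N.E j i → s j ≠ some t) :
    N.payoff c0 s i = -N.theta i t := by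
  have hempty : Finset.univ.filter (fun j => N.E j i ∧ s j = some t) = ∅ :=
    Finset.filter_eq_empty_iff.2 fun j _ ⟨hE, hj⟩ => hnbr j hE hj
  simp [payoff, hi, hsrc, hempty]

theorem Nash.exists_neighbour_adopts [DecidableEq V] {N : SN V P} {c0 : ℝ} {s : V → Option P}
    (hs : N.Nash c0 s) {i : V} {t : P} (hi : s i = some t) (hsrc : ¬ N.isSource i) :
    ∃ j, N.E j i ∧ s j = some t := by
  by_contra! hnbr
  have h := hs.payoff_nonneg i
  rw [N.payoff_eq_neg_theta c0 hi hsrc hnbr] at h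
  linarith [N.thetaPos i t]

end SN

open Fin.CommRing in
theorem Fin.forall_of_imp_sub_one {n : ℕ} [NeZero n] {p : Fin n → Prop}
    (hstep : ∀ k, p k → p (k - 1)) {i : Fin n} (hi : p i) (j : Fin n) : p j := by
  have hdown : ∀ m : ℕ, p (i - m) := by
    intro m
    induction m with
    | zero => simpa using hi
    | succ m ih =>
      have hsucc : i - ((m + 1 : ℕ) : Fin n) = i - m - 1 := by push_cast; ring
      exact hsucc ▸ hstep _ ih
  simpa using hdown (i - j).val

open Fin.CommRing in
theorem SN.simpleCycle.Nash_pred_eq {n : ℕ} {P : Type} [NeZero n] {N : SN (Fin n) P}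
    (hcyc : N.simpleCycle) {c0 : ℝ} {s : Fin n → Option P} (hs : N.Nash c0 s) {i : Fin n}
    {t : P} (hi : s i = some t) : s (i - 1) = some t := by
  have hsrc : ¬ N.isSource i := fun h => h (i - 1) ((hcyc _ _).2 (by ring))
  obtain ⟨j, hE, hj⟩ := hs.exists_neighbour_adopts hi hsrc
  have hji : j = i - 1 := by rw [(hcyc j i).1 hE]; ring
  exact hji ▸ hj

/-- in a simple cycle network, if `s` is a Nash equilibrium and
`s i = t ≠ t₀`, then the cyclic predecessor `i - 1` of `i` also chose `t`, and
consequently every node chose `t`. -/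
theorem stmt10 {n : ℕ} {P : Type} [NeZero n]
    (N : SN (Fin n) P) (hcyc : N.simpleCycle) (c0 : ℝ)
    (s : Fin n → Option P) (hs : N.Nash c0 s) (i : Fin n) (t : P)
    (hi : s i = some t) :
    s (i - 1) = some t ∧ ∀ j, s j = some t := by
  have hpred : ∀ k, s k = some t → s (k - 1) = some t := fun _ => hcyc.Nash_pred_eq hs
  exact ⟨hpred i hi, Fin.forall_of_imp_sub_one hpred hi⟩
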